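/- Let 0 < H < 1/2. There is a constant C > 0 (one may take C = 2) such that for every integer m ≥ 0 and every integer n ≥ 2, n^{−2} Σ_{1≤j<i≤n−1} R_H(i/n, j/n)^{2m} (i/n)^{−H(2m+1)} (j/n)^{−H(2m+1)} ≤ C/(2Hm − H + 1). -/

import Mathlib

open MeasureTheory Filter Topology Real

/-- Covariance function of fractional Brownian motion with Hurst parameter `H`. -/
noncomputable def RH (H t s : ℝ) : ℝ :=
  (t ^ (2 * H) + s ^ (2 * H) - |t - s| ^ (2 * H)) / 2

open Finset

/-! For `s ≤ t` and `2H ≤ 1`, subadditivity of `x ↦ x ^ (2H)` gives `0 ≤ R_H(t, s) ≤ s ^ (2H)`,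
so the `(i, j)` summand is at most `(j/n) ^ a * (i/n) ^ (-H(2m+1))` with `a = 2Hm - H > -1`.
Since `j ^ a ≤ 2 x ^ a` on `[j, j + 1]`, the inner sum is at most `2n (i/n) ^ (a+1) / (a+1)`
times that factor, i.e. `2n (i/n) ^ (1-2H) / (a+1) ≤ 2n / (a+1)`; there are fewer than `n`
values of `i`. -/

section Covariance

variable {H t s : ℝ}

theorem RH_nonneg (hH : 0 ≤ H) (hs : 0 ≤ s) (hst : s ≤ t) : 0 ≤ RH H t s := by
  have hdiff : |t - s| ^ (2 * H) ≤ t ^ (2 * H) := by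
    rw [abs_of_nonneg (sub_nonneg.2 hst)]
    exact rpow_le_rpow (sub_nonneg.2 hst) (by linarith) (by linarith)
  have := rpow_nonneg hs (2 * H)
  unfold RH
  linarith

theorem RH_le_rpow (hH : 0 ≤ H) (hH' : H ≤ 1 / 2) (hs : 0 ≤ s) (hst : s ≤ t) :
    RH H t s ≤ s ^ (2 * H) := by
  have hsub : t ^ (2 * H) ≤ s ^ (2 * H) + |t - s| ^ (2 * H) := by
    rw [abs_of_nonneg (sub_nonneg.2 hst)]
    simpa using rpow_add_le_add_rpow hs (sub_nonneg.2 hst) (by linarith) (by linarith)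
  unfold RH
  linarith

theorem RH_pow_mul_rpow_le (m : ℕ) (hH : 0 ≤ H) (hH' : H ≤ 1 / 2) (hs : 0 < s) (hst : s ≤ t) :
    RH H t s ^ (2 * m) * s ^ (-(H * (2 * (m : ℝ) + 1))) ≤ s ^ (2 * H * m - H) := by
  have hpow : RH H t s ^ (2 * m) ≤ s ^ (2 * H * (2 * m : ℕ)) := by
    rw [rpow_mul hs.le, rpow_natCast]
    exact pow_le_pow_left₀ (RH_nonneg hH hs.le hst) (RH_le_rpow hH hH' hs.le hst) _
  calc RH H t s ^ (2 * m) * s ^ (-(H * (2 * (m : ℝ) + 1)))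
      ≤ s ^ (2 * H * (2 * m : ℕ)) * s ^ (-(H * (2 * (m : ℝ) + 1))) := by gcongr
    _ = s ^ (2 * H * m - H) := by
      rw [← rpow_add hs]
      congr 1
      push_cast
      ring

end Covariance

section RiemannSum

theorem rpow_le_two_mul_rpow {a x y : ℝ} (ha : -1 ≤ a) (hx : 0 < x) (hxy : x ≤ y)
    (hy : y ≤ 2 * x) : x ^ a ≤ 2 * y ^ a := by
  rcases le_or_gt 0 a with ha0 | ha0
  · have := rpow_le_rpow hx.le hxy ha0
    linarith [rpow_nonneg (hx.le.trans hxy) a]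
  · have h2x : (2 * x) ^ a ≤ y ^ a := rpow_le_rpow_of_nonpos (hx.trans_le hxy) hy ha0.le
    have h2 : (2 : ℝ) ^ (-1 : ℝ) ≤ 2 ^ a := rpow_le_rpow_of_exponent_le one_le_two ha
    rw [mul_rpow zero_le_two hx.le] at h2x
    rw [rpow_neg_one] at h2
    nlinarith [rpow_pos_of_pos hx a]

theorem sum_Ico_one_rpow_le {a : ℝ} (ha : -1 < a) (n : ℕ) :
    ∑ j ∈ Ico 1 n, (j : ℝ) ^ a ≤ 2 * (n : ℝ) ^ (a + 1) / (a + 1) := by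
  have ha1 : 0 < a + 1 := by linarith
  rcases Nat.eq_zero_or_pos n with rfl | hn
  · simp [zero_rpow ha1.ne']
  have hint : IntegrableOn (fun x : ℝ ↦ 2 * x ^ a) (Set.Ico (1 : ℕ) n) := by
    refine (ContinuousOn.integrableOn_Icc ?_).mono_set Set.Ico_subset_Icc_self
    exact continuousOn_const.mul fun x hx ↦
      (continuousAt_rpow_const x a
        (Or.inl (zero_lt_one.trans_le (by exact_mod_cast hx.1)).ne')).continuousWithinAt
  calc ∑ j ∈ Ico 1 n, (j : ℝ) ^ a
      ≤ ∫ x in (1 : ℕ)..n, 2 * x ^ a := by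
        refine sum_Ico_le_integral_of_le (f := fun y ↦ y ^ a) (hn : 1 ≤ n) (fun j hj x hx ↦ ?_) hint
        simp only [Set.mem_Ico, Nat.cast_add, Nat.cast_one] at hj hx
        have hj1 : (1 : ℝ) ≤ j := by exact_mod_cast hj.1
        exact rpow_le_two_mul_rpow ha.le (by linarith) hx.1 (by linarith)
    _ = 2 * ((n : ℝ) ^ (a + 1) - 1) / (a + 1) := by
        rw [intervalIntegral.integral_const_mul, integral_rpow (Or.inl ha)]
        simp [mul_div_assoc]
    _ ≤ 2 * (n : ℝ) ^ (a + 1) / (a + 1) := by gcongr; linarith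

theorem sum_Ico_one_div_rpow_le {a x : ℝ} (ha : -1 < a) (hx : 0 < x) (n : ℕ) :
    ∑ j ∈ Ico 1 n, ((j : ℝ) / x) ^ a ≤ 2 * x * (n / x) ^ (a + 1) / (a + 1) := by
  simp_rw [div_rpow (Nat.cast_nonneg _) hx.le, ← sum_div]
  calc (∑ j ∈ Ico 1 n, (j : ℝ) ^ a) / x ^ a
      ≤ 2 * (n : ℝ) ^ (a + 1) / (a + 1) / x ^ a := by
        gcongr
        exact sum_Ico_one_rpow_le ha n
    _ = 2 * x * ((n : ℝ) ^ (a + 1) / x ^ (a + 1)) / (a + 1) := by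
        rw [rpow_add_one hx.ne']
        field_simp

end RiemannSum

theorem sum_Ico_one_RH_pow_mul_rpow_le {H : ℝ} (m : ℕ) {i n : ℕ} (hH : 0 ≤ H) (hH' : H ≤ 1 / 2)
    (hi : 0 < i) (hin : i ≤ n) :
    ∑ j ∈ Ico 1 i, RH H ((i : ℝ) / n) ((j : ℝ) / n) ^ (2 * m) *
        ((i : ℝ) / n) ^ (-(H * (2 * (m : ℝ) + 1))) * ((j : ℝ) / n) ^ (-(H * (2 * (m : ℝ) + 1)))
      ≤ 2 * n / (2 * H * m - H + 1) := by
  set t : ℝ := (i : ℝ) / n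
  set p : ℝ := H * (2 * (m : ℝ) + 1)
  set a : ℝ := 2 * H * m - H
  have hn : (0 : ℝ) < n := by exact_mod_cast hi.trans_le hin
  have ht : 0 < t := by positivity
  have ht1 : t ≤ 1 := div_le_one_of_le₀ (by exact_mod_cast hin) hn.le
  have ha : -1 < a := by nlinarith [mul_nonneg hH (Nat.cast_nonneg m : (0 : ℝ) ≤ m)]
  have hexp : -p + (a + 1) = 1 - 2 * H := by simp only [p, a]; ring
  calc ∑ j ∈ Ico 1 i, RH H t ((j : ℝ) / n) ^ (2 * m) * t ^ (-p) * ((j : ℝ) / n) ^ (-p)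
      ≤ ∑ j ∈ Ico 1 i, t ^ (-p) * ((j : ℝ) / n) ^ a := by
        refine sum_le_sum fun j hj ↦ ?_
        have hj : 1 ≤ j ∧ j < i := mem_Ico.1 hj
        have hs : (0 : ℝ) < j / n := div_pos (by exact_mod_cast hj.1) hn
        have hst : (j : ℝ) / n ≤ t := div_le_div_of_nonneg_right (by exact_mod_cast hj.2.le) hn.le
        rw [mul_right_comm, mul_comm]
        gcongr
        exact RH_pow_mul_rpow_le m hH hH' hs hst
    _ = t ^ (-p) * ∑ j ∈ Ico 1 i, ((j : ℝ) / n) ^ a := by rw [mul_sum]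
    _ ≤ t ^ (-p) * (2 * n * t ^ (a + 1) / (a + 1)) := by
        gcongr
        exact sum_Ico_one_div_rpow_le ha hn i
    _ = 2 * n / (a + 1) * t ^ (1 - 2 * H) := by
        rw [← hexp, rpow_add ht (-p) (a + 1)]
        ring
    _ ≤ 2 * n / (a + 1) :=
        mul_le_of_le_one_right (div_nonneg (by positivity) (by linarith))
          (rpow_le_one ht.le ht1 (by linarith))

theorem statement12 (H : ℝ) (hH : 0 < H) (hH' : H < 1 / 2) :
    ∃ C : ℝ, 0 < C ∧ ∀ m n : ℕ, 2 ≤ n →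
      ((n : ℝ) ^ 2)⁻¹ *
          ∑ i ∈ Finset.Ico 1 n, ∑ j ∈ Finset.Ico 1 i,
            RH H ((i : ℝ) / n) ((j : ℝ) / n) ^ (2 * m) *
              ((i : ℝ) / n) ^ (-(H * (2 * (m : ℝ) + 1))) *
              ((j : ℝ) / n) ^ (-(H * (2 * (m : ℝ) + 1))) ≤
        C / (2 * H * m - H + 1) := by
  refine ⟨2, two_pos, fun m n hn ↦ ?_⟩
  have ha : 0 < 2 * H * m - H + 1 := by
    nlinarith [mul_nonneg hH.le (Nat.cast_nonneg m : (0 : ℝ) ≤ m)]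
  have hcard : ((Ico 1 n).card : ℝ) ≤ n := by
    rw [Nat.card_Ico]
    exact_mod_cast Nat.sub_le n 1
  calc ((n : ℝ) ^ 2)⁻¹ * ∑ i ∈ Ico 1 n, ∑ j ∈ Ico 1 i,
          RH H ((i : ℝ) / n) ((j : ℝ) / n) ^ (2 * m) *
            ((i : ℝ) / n) ^ (-(H * (2 * (m : ℝ) + 1))) * ((j : ℝ) / n) ^ (-(H * (2 * (m : ℝ) + 1)))
      ≤ ((n : ℝ) ^ 2)⁻¹ * ∑ i ∈ Ico 1 n, 2 * (n : ℝ) / (2 * H * m - H + 1) := by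
        gcongr with i hi
        have hi : 1 ≤ i ∧ i < n := mem_Ico.1 hi
        exact sum_Ico_one_RH_pow_mul_rpow_le m hH.le hH'.le hi.1 hi.2.le
    _ ≤ ((n : ℝ) ^ 2)⁻¹ * (n * (2 * n / (2 * H * m - H + 1))) := by
        rw [sum_const, nsmul_eq_mul]
        gcongr
    _ = 2 / (2 * H * m - H + 1) := by field_simp
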